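/- Fix λ > 0 and let Ω_λ = {u ∈ H₀(S²) : |u(r)| ≤ λ for a.e. r ∈ S²}. The map Γ : Ω_λ ⊂ H₀(S²) → H₀(S²) is continuous with respect to the L²(S²)-norm, and its image Γ(Ω_λ) is relatively compact in L²(S²). -/

import Mathlib

open MeasureTheory Filter Topology Real

/-- The unit sphere `S² ⊆ ℝ³`. -/
noncomputable abbrev S2 := Metric.sphere (0 : EuclideanSpace ℝ (Fin 3)) 1

/-- The surface measure `σ` on `S²`. -/
noncomputable def sphereMeasure : Measure S2 :=
  (volume : Measure (EuclideanSpace ℝ (Fin 3))).toSphere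

/-- `|r × r'|`, the Euclidean norm of the cross product of `r, r' ∈ S²`. -/
noncomputable def crossNorm (r r' : S2) : ℝ :=
  ‖(EuclideanSpace.equiv (Fin 3) ℝ).symm
    (crossProduct (EuclideanSpace.equiv (Fin 3) ℝ (r : EuclideanSpace ℝ (Fin 3)))
      (EuclideanSpace.equiv (Fin 3) ℝ (r' : EuclideanSpace ℝ (Fin 3))))‖

/-- `Γ[u](r) = (∫_{S²} e^{-u} dσ)⁻¹ ∫_{S²} (|r × r'| - π/4) e^{-u(r')} dσ(r')`. -/
noncomputable def GammaS (u : S2 → ℝ) (r : S2) : ℝ :=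
  (∫ r', Real.exp (-(u r')) ∂sphereMeasure)⁻¹ *
    ∫ r', (crossNorm r r' - π / 4) * Real.exp (-(u r')) ∂sphereMeasure

/-- `H₀(S²) = {u ∈ L²(S²) : u(-r) = u(r) a.e., ∫ u dσ = 0}`. -/
noncomputable def H0 : Set (Lp ℝ 2 sphereMeasure) :=
  {u | (∀ᵐ r ∂sphereMeasure, u (-r) = u r) ∧ (∫ r, u r ∂sphereMeasure) = 0}

/-- `Ω_λ = {u ∈ H₀(S²) : |u(r)| ≤ λ a.e.}`. -/
noncomputable def OmegaLam (lam : ℝ) : Set (Lp ℝ 2 sphereMeasure) :=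
  {u ∈ H0 | ∀ᵐ r ∂sphereMeasure, |u r| ≤ lam}

open scoped NNReal ENNReal BoundedContinuousFunction

/-!
`Γ[u]` is the average of the kernel `|r × r'| - π/4`, which is bounded by `1` and `1`-Lipschitz in
`r` (as `|(r - s) × r'| ≤ |r - s|`), against the weight `e^{-u}` normalized to total mass one.
So every `Γ[u]` is bounded by `1` and `1`-Lipschitz on `S²`, and by Arzelà–Ascoli these functions
form a relatively compact subset of `C(S²)`, hence of `L²`. For `|u|, |v| ≤ λ` the normalizing
constants are at least `e^{-λ} σ(S²)`, so `Γ[u] - Γ[v]` is bounded uniformly on `S²` by a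
multiple of `‖e^{-u} - e^{-v}‖_{L¹} ≤ e^λ ‖u - v‖_{L¹} ≤ e^λ σ(S²)^{1/2} ‖u - v‖_{L²}`.
-/

section KernelAverage

variable {X Y : Type*} [MeasurableSpace X] {μ : Measure X}

noncomputable def kernelAverage (μ : Measure X) (k : Y → X → ℝ) (w : X → ℝ) (y : Y) : ℝ :=
  (∫ x, w x ∂μ)⁻¹ * ∫ x, k y x * w x ∂μ

lemma abs_integral_mul_le_mul_integral_abs {f w : X → ℝ} {C : ℝ} (hw : Integrable w μ)
    (hf : ∀ᵐ x ∂μ, |f x| ≤ C) : |∫ x, f x * w x ∂μ| ≤ C * ∫ x, |w x| ∂μ := by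
  rw [← integral_const_mul C fun x => |w x|]
  refine norm_integral_le_of_norm_le (G := ℝ) (hw.abs.const_mul C) ?_
  filter_upwards [hf] with x hx
  rw [Real.norm_eq_abs, abs_mul]
  exact mul_le_mul_of_nonneg_right hx (abs_nonneg _)

lemma integral_abs_of_ae_nonneg {w : X → ℝ} (hw0 : 0 ≤ᵐ[μ] w) :
    ∫ x, |w x| ∂μ = ∫ x, w x ∂μ :=
  integral_congr_ae (hw0.mono fun _ hx => abs_of_nonneg hx)

variable {k : Y → X → ℝ} {w v : X → ℝ} {C : ℝ}

lemma abs_kernelAverage_le (hw : Integrable w μ) (hw0 : 0 ≤ᵐ[μ] w) (hZ : 0 < ∫ x, w x ∂μ)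
    (hk : ∀ y x, |k y x| ≤ C) (y : Y) : |kernelAverage μ k w y| ≤ C := by
  rw [kernelAverage, abs_mul, abs_inv, abs_of_pos hZ, inv_mul_le_iff₀ hZ, mul_comm,
    ← integral_abs_of_ae_nonneg hw0]
  exact abs_integral_mul_le_mul_integral_abs hw (ae_of_all _ (hk y))

lemma lipschitzWith_kernelAverage [PseudoMetricSpace Y] {K : ℝ≥0} (hw : Integrable w μ)
    (hw0 : 0 ≤ᵐ[μ] w) (hZ : 0 < ∫ x, w x ∂μ) (hkw : ∀ y, Integrable (fun x => k y x * w x) μ)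
    (hk : ∀ x, LipschitzWith K (k · x)) : LipschitzWith K (kernelAverage μ k w) := by
  refine LipschitzWith.of_dist_le_mul fun y y' => ?_
  rw [Real.dist_eq, kernelAverage, kernelAverage, ← mul_sub, ← integral_sub (hkw y) (hkw y'),
    abs_mul, abs_inv, abs_of_pos hZ, inv_mul_le_iff₀ hZ]
  calc |∫ x, (k y x * w x - k y' x * w x) ∂μ| = |∫ x, (k y x - k y' x) * w x ∂μ| := by
        simp_rw [sub_mul]
    _ ≤ K * dist y y' * ∫ x, |w x| ∂μ :=
        abs_integral_mul_le_mul_integral_abs hw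
          (ae_of_all _ fun x => (Real.dist_eq _ _).symm.trans_le ((hk x).dist_le_mul y y'))
    _ = (∫ x, w x ∂μ) * (K * dist y y') := by rw [integral_abs_of_ae_nonneg hw0, mul_comm]

lemma abs_kernelAverage_sub_le (hw : Integrable w μ) (hv : Integrable v μ) (hv0 : 0 ≤ᵐ[μ] v)
    (hZw : 0 < ∫ x, w x ∂μ) (hZv : 0 < ∫ x, v x ∂μ)
    (hkw : ∀ y, Integrable (fun x => k y x * w x) μ)
    (hkv : ∀ y, Integrable (fun x => k y x * v x) μ) (hk : ∀ y x, |k y x| ≤ C) (y : Y) :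
    |kernelAverage μ k w y - kernelAverage μ k v y|
      ≤ 2 * C * (∫ x, w x ∂μ)⁻¹ * ∫ x, |w x - v x| ∂μ := by
  set Zw := ∫ x, w x ∂μ
  set Zv := ∫ x, v x ∂μ
  set A := ∫ x, k y x * w x ∂μ
  set B := ∫ x, k y x * v x ∂μ
  set δ := ∫ x, |w x - v x| ∂μ
  have hAB : |A - B| ≤ C * δ := by
    rw [← integral_sub (hkw y) (hkv y)]
    simp_rw [← mul_sub]
    exact abs_integral_mul_le_mul_integral_abs (hw.sub hv) (ae_of_all _ (hk y))
  have hZ : |Zv - Zw| ≤ δ := by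
    rw [abs_sub_comm, ← integral_sub hw hv]
    exact abs_integral_le_integral_abs
  have hB : |B / Zv| ≤ C := by
    rw [abs_div, abs_of_pos hZv, div_le_iff₀ hZv]
    simpa only [integral_abs_of_ae_nonneg hv0] using
      abs_integral_mul_le_mul_integral_abs hv (ae_of_all _ (hk y))
  -- the normalizations differ by `Zv - Zw`, which costs a second `C δ`
  have hsplit : kernelAverage μ k w y - kernelAverage μ k v y
      = Zw⁻¹ * ((A - B) + (Zv - Zw) * (B / Zv)) := by
    change Zw⁻¹ * A - Zv⁻¹ * B = _
    field_simp
    ring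
  rw [hsplit, abs_mul, abs_inv, abs_of_pos hZw]
  calc Zw⁻¹ * |A - B + (Zv - Zw) * (B / Zv)| ≤ Zw⁻¹ * (C * δ + δ * C) := by
        gcongr
        calc |A - B + (Zv - Zw) * (B / Zv)| ≤ |A - B| + |Zv - Zw| * |B / Zv| := by
              rw [← abs_mul]; exact abs_add_le _ _
          _ ≤ C * δ + δ * C := by gcongr
    _ = 2 * C * Zw⁻¹ * δ := by ring

end KernelAverage

section LpBounds

variable {X : Type*} [MeasurableSpace X] {μ : Measure X} [IsFiniteMeasure μ]

lemma integral_abs_sub_le_mul_dist (f g : Lp ℝ 2 μ) :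
    ∫ x, |f x - g x| ∂μ ≤ μ.real Set.univ ^ (1 / 2 : ℝ) * dist f g := by
  have hfg : MemLp (⇑f - ⇑g) 2 μ := (Lp.memLp f).sub (Lp.memLp g)
  have h12 := eLpNorm_le_eLpNorm_mul_rpow_measure_univ one_le_two hfg.aestronglyMeasurable
  norm_num at h12
  have h1 : ∫ x, |f x - g x| ∂μ = (eLpNorm (⇑f - ⇑g) 1 μ).toReal := by
    rw [eLpNorm_one_eq_lintegral_enorm, ← integral_norm_eq_lintegral_enorm hfg.1]
    rfl
  rw [h1, Lp.dist_def, mul_comm, measureReal_def, ENNReal.toReal_rpow, ← ENNReal.toReal_mul]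
  exact ENNReal.toReal_mono (ENNReal.mul_ne_top hfg.eLpNorm_ne_top
    (ENNReal.rpow_ne_top_of_nonneg (by norm_num) (measure_ne_top _ _))) h12

lemma tendsto_eLpNorm_sub_of_abs_sub_le {ι : Type*} {l : Filter ι} (p : ℝ≥0∞)
    {F : ι → X → ℝ} {G : X → ℝ} {d : ι → ℝ} (hd : Tendsto d l (𝓝 0))
    (hFG : ∀ i x, |F i x - G x| ≤ d i) :
    Tendsto (fun i => eLpNorm (fun x => F i x - G x) p μ) l (𝓝 0) := by
  have hbound (i : ι) : eLpNorm (fun x => F i x - G x) p μ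
      ≤ μ Set.univ ^ p.toReal⁻¹ * ENNReal.ofReal (d i) :=
    eLpNorm_le_of_ae_bound (ae_of_all _ (hFG i))
  have hlim : Tendsto (fun i => μ Set.univ ^ p.toReal⁻¹ * ENNReal.ofReal (d i)) l (𝓝 0) := by
    simpa using ENNReal.Tendsto.const_mul (ENNReal.tendsto_ofReal hd)
      (.inr (ENNReal.rpow_ne_top_of_nonneg (by positivity) (measure_ne_top μ Set.univ)))
  exact tendsto_of_tendsto_of_tendsto_of_le_of_le tendsto_const_nhds hlim (fun _ => zero_le)
    hbound

lemma isCompact_closure_setOf_ae_eq_lipschitzWith [MetricSpace X] [CompactSpace X] [BorelSpace X]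
    (μ : Measure X) [IsFiniteMeasure μ] (p : ℝ≥0∞) [Fact (1 ≤ p)] (K : ℝ≥0) (M : ℝ) :
    IsCompact (closure {f : Lp ℝ p μ |
      ∃ g : X → ℝ, LipschitzWith K g ∧ (∀ x, |g x| ≤ M) ∧ (f : X → ℝ) =ᵐ[μ] g}) := by
  set A : Set (X →ᵇ ℝ) := {g | LipschitzWith K g ∧ ∀ x, g x ∈ Set.Icc (-M) M}
  have hA_closed : IsClosed A := by
    have hbdd : IsClosed {g : X → ℝ | ∀ x, g x ∈ Set.Icc (-M) M} := by
      rw [Set.ofPred_forall]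
      exact isClosed_iInter fun x => isClosed_Icc.preimage (continuous_apply x)
    exact ((isClosed_setOfPred_lipschitzWith K).inter hbdd).preimage
      BoundedContinuousFunction.continuous_coe
  have hA : IsCompact A :=
    BoundedContinuousFunction.arzela_ascoli₂ (Set.Icc (-M) M) isCompact_Icc A hA_closed
      (fun g x hg => hg.2 x)
      (LipschitzWith.uniformEquicontinuous _ K fun g => g.2.1).equicontinuous
  have hA_Lp : IsCompact (BoundedContinuousFunction.toLp p μ ℝ '' A) :=
    hA.image (BoundedContinuousFunction.toLp p μ ℝ).continuous
  refine hA_Lp.of_isClosed_subset isClosed_closure (closure_minimal ?_ hA_Lp.isClosed)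
  rintro f ⟨g, hg_lip, hg_bdd, hfg⟩
  refine ⟨.ofNormedAddCommGroup g hg_lip.continuous M hg_bdd,
    ⟨hg_lip, fun x => abs_le.1 (hg_bdd x)⟩, Lp.ext ?_⟩
  exact (BoundedContinuousFunction.coeFn_toLp p μ ℝ _).trans hfg.symm

end LpBounds

section BoltzmannWeight

variable {X : Type*} [MeasurableSpace X] {μ : Measure X} [IsFiniteMeasure μ] {u v : X → ℝ}
  {lam : ℝ}

lemma abs_exp_sub_exp_le_of_le {x y c : ℝ} (hx : x ≤ c) (hy : y ≤ c) :
    |exp x - exp y| ≤ exp c * |x - y| :=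
  (convex_Iic c).norm_image_sub_le_of_norm_deriv_le (fun _ _ => differentiableAt_exp)
    (fun z hz => by simpa using exp_le_exp.2 hz) hy hx

lemma integrable_exp_neg_of_abs_le (hu : AEStronglyMeasurable u μ)
    (hb : ∀ᵐ x ∂μ, |u x| ≤ lam) : Integrable (fun x => exp (-u x)) μ := by
  refine (integrable_const (exp lam)).mono' (continuous_exp.comp_aestronglyMeasurable hu.neg) ?_
  filter_upwards [hb] with x hx
  rw [Real.norm_of_nonneg (exp_pos _).le, exp_le_exp]
  exact neg_le.1 (neg_le_of_abs_le hx)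

lemma integral_exp_neg_pos [NeZero μ] (hu : AEStronglyMeasurable u μ)
    (hb : ∀ᵐ x ∂μ, |u x| ≤ lam) : 0 < ∫ x, exp (-u x) ∂μ :=
  integral_exp_pos (integrable_exp_neg_of_abs_le hu hb)

lemma exp_neg_mul_measureReal_le_integral_exp_neg (hu : AEStronglyMeasurable u μ)
    (hb : ∀ᵐ x ∂μ, |u x| ≤ lam) : exp (-lam) * μ.real Set.univ ≤ ∫ x, exp (-u x) ∂μ := by
  rw [mul_comm, ← smul_eq_mul, ← integral_const]
  refine integral_mono_ae (integrable_const _) (integrable_exp_neg_of_abs_le hu hb) ?_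
  filter_upwards [hb] with x hx
  exact exp_le_exp.2 (neg_le_neg (le_of_abs_le hx))

lemma integral_abs_exp_neg_sub_le (hu : AEStronglyMeasurable u μ) (hv : AEStronglyMeasurable v μ)
    (hbu : ∀ᵐ x ∂μ, |u x| ≤ lam) (hbv : ∀ᵐ x ∂μ, |v x| ≤ lam)
    (huv : Integrable (fun x => u x - v x) μ) :
    ∫ x, |exp (-u x) - exp (-v x)| ∂μ ≤ exp lam * ∫ x, |u x - v x| ∂μ := by
  rw [← integral_const_mul]
  refine integral_mono_ae ((integrable_exp_neg_of_abs_le hu hbu).sub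
    (integrable_exp_neg_of_abs_le hv hbv)).abs (huv.abs.const_mul _) ?_
  filter_upwards [hbu, hbv] with x hux hvx
  have := abs_exp_sub_exp_le_of_le (neg_le.1 (neg_le_of_abs_le hux))
    (neg_le.1 (neg_le_of_abs_le hvx))
  rwa [neg_sub_neg, abs_sub_comm (v x)] at this

end BoltzmannWeight

section CrossProduct

noncomputable def euclideanCross (a b : EuclideanSpace ℝ (Fin 3)) : EuclideanSpace ℝ (Fin 3) :=
  (EuclideanSpace.equiv (Fin 3) ℝ).symm
    (crossProduct (EuclideanSpace.equiv (Fin 3) ℝ a) (EuclideanSpace.equiv (Fin 3) ℝ b))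

lemma euclideanCross_sub_left (a b c : EuclideanSpace ℝ (Fin 3)) :
    euclideanCross (a - b) c = euclideanCross a c - euclideanCross b c := by
  simp only [euclideanCross, map_sub, LinearMap.sub_apply]

lemma euclideanCross_swap (a b : EuclideanSpace ℝ (Fin 3)) :
    euclideanCross b a = -euclideanCross a b := by
  rw [euclideanCross, euclideanCross, ← cross_anticomm, map_neg]

lemma norm_euclideanCross_le (a b : EuclideanSpace ℝ (Fin 3)) :
    ‖euclideanCross a b‖ ≤ ‖a‖ * ‖b‖ := by
  have lagrange : ‖euclideanCross a b‖ ^ 2 = ‖a‖ ^ 2 * ‖b‖ ^ 2 - (inner ℝ a b) ^ 2 := by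
    simp only [← real_inner_self_eq_norm_sq, EuclideanSpace.inner_eq_star_dotProduct, star_trivial]
    simp only [euclideanCross, EuclideanSpace.equiv, PiLp.coe_continuousLinearEquiv,
      PiLp.coe_symm_continuousLinearEquiv, WithLp.ofLp_toLp, cross_dot_cross,
      dotProduct_comm b.ofLp]
    ring
  refine (pow_le_pow_iff_left₀ (norm_nonneg _) (by positivity) two_ne_zero).1 ?_
  rw [lagrange, mul_pow]
  exact sub_le_self _ (sq_nonneg _)

end CrossProduct

section Sphere

instance : IsFiniteMeasure sphereMeasure := by unfold sphereMeasure; infer_instance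

instance : NeZero sphereMeasure := by
  refine ⟨fun h => ?_⟩
  have := congrArg (· Set.univ) h
  simp only [sphereMeasure, Measure.toSphere_apply_univ, Measure.coe_zero, Pi.zero_apply,
    mul_eq_zero, Nat.cast_eq_zero, finrank_euclideanSpace_fin] at this
  exact this.elim (by norm_num) (Metric.measure_ball_pos _ _ one_pos).ne'

lemma crossNorm_eq_norm_euclideanCross (r r' : S2) : crossNorm r r' = ‖euclideanCross r r'‖ :=
  rfl

lemma crossNorm_comm (r r' : S2) : crossNorm r r' = crossNorm r' r := by
  rw [crossNorm_eq_norm_euclideanCross, crossNorm_eq_norm_euclideanCross, euclideanCross_swap,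
    norm_neg]

lemma crossNorm_le_one (r r' : S2) : crossNorm r r' ≤ 1 := by
  simpa [crossNorm_eq_norm_euclideanCross] using norm_euclideanCross_le r r'

lemma lipschitzWith_crossNorm_left (r' : S2) : LipschitzWith 1 (crossNorm · r') := by
  refine LipschitzWith.of_dist_le_mul fun r s => ?_
  calc dist (crossNorm r r') (crossNorm s r')
      ≤ ‖euclideanCross r r' - euclideanCross s r'‖ := dist_norm_norm_le _ _
    _ = ‖euclideanCross ((r : EuclideanSpace ℝ (Fin 3)) - s) r'‖ := by
        rw [euclideanCross_sub_left]
    _ ≤ 1 * dist r s := by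
        simpa [Subtype.dist_eq, dist_eq_norm] using
          norm_euclideanCross_le ((r : EuclideanSpace ℝ (Fin 3)) - s) r'

lemma continuous_crossNorm_right (r : S2) : Continuous (crossNorm r) :=
  (lipschitzWith_crossNorm_left r).continuous.congr fun r' => crossNorm_comm r' r

lemma abs_crossNorm_sub_pi_div_four_le_one (r r' : S2) : |crossNorm r r' - π / 4| ≤ 1 := by
  have h0 : 0 ≤ crossNorm r r' := norm_nonneg _
  have h1 := crossNorm_le_one r r'
  rw [abs_le]
  constructor <;> linarith [pi_pos, pi_le_four]

end Sphere

section Gamma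

variable {lam : ℝ} {u : S2 → ℝ}

lemma gammaS_eq_kernelAverage (u : S2 → ℝ) :
    GammaS u = kernelAverage sphereMeasure (fun r r' => crossNorm r r' - π / 4)
      (fun r' => exp (-u r')) :=
  rfl

variable (hu : AEStronglyMeasurable u sphereMeasure) (hb : ∀ᵐ r ∂sphereMeasure, |u r| ≤ lam)
include hu hb

lemma integrable_kernel_mul_exp_neg (r : S2) :
    Integrable (fun r' => (crossNorm r r' - π / 4) * exp (-u r')) sphereMeasure :=
  (integrable_exp_neg_of_abs_le hu hb).bdd_mul
    ((continuous_crossNorm_right r).sub continuous_const).aestronglyMeasurable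
    (ae_of_all _ (abs_crossNorm_sub_pi_div_four_le_one r))

lemma abs_gammaS_le_one (r : S2) : |GammaS u r| ≤ 1 := by
  rw [gammaS_eq_kernelAverage]
  exact abs_kernelAverage_le (integrable_exp_neg_of_abs_le hu hb)
    (ae_of_all _ fun _ => (exp_pos _).le) (integral_exp_neg_pos hu hb)
    abs_crossNorm_sub_pi_div_four_le_one r

lemma lipschitzWith_gammaS : LipschitzWith 1 (GammaS u) := by
  rw [gammaS_eq_kernelAverage]
  refine lipschitzWith_kernelAverage (integrable_exp_neg_of_abs_le hu hb)
    (ae_of_all _ fun _ => (exp_pos _).le) (integral_exp_neg_pos hu hb)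
    (integrable_kernel_mul_exp_neg hu hb) fun r' => LipschitzWith.of_dist_le_mul fun r s => ?_
  simpa only [dist_sub_right] using (lipschitzWith_crossNorm_left r').dist_le_mul r s

end Gamma

lemma exists_abs_gammaS_sub_le_mul_dist (lam : ℝ) : ∃ L, ∀ u ∈ OmegaLam lam, ∀ v ∈ OmegaLam lam,
    ∀ r, |GammaS u r - GammaS v r| ≤ L * dist u v := by
  set σ₀ := sphereMeasure.real Set.univ
  refine ⟨2 * (exp (-lam) * σ₀)⁻¹ * (exp lam * σ₀ ^ (1 / 2 : ℝ)), fun u hu v hv r => ?_⟩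
  have hum := Lp.aestronglyMeasurable u
  have hvm := Lp.aestronglyMeasurable v
  have hZ : exp (-lam) * σ₀ ≤ ∫ r, exp (-u r) ∂sphereMeasure :=
    exp_neg_mul_measureReal_le_integral_exp_neg hum hu.2
  have hσ₀ : 0 < σ₀ := measureReal_univ_pos
  have huv : Integrable (fun r => u r - v r) sphereMeasure :=
    ((Lp.memLp u).integrable one_le_two).sub ((Lp.memLp v).integrable one_le_two)
  rw [gammaS_eq_kernelAverage, gammaS_eq_kernelAverage]
  calc _
      ≤ 2 * 1 * (∫ r, exp (-u r) ∂sphereMeasure)⁻¹ *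
          ∫ r', |exp (-u r') - exp (-v r')| ∂sphereMeasure :=
        abs_kernelAverage_sub_le (integrable_exp_neg_of_abs_le hum hu.2)
          (integrable_exp_neg_of_abs_le hvm hv.2) (ae_of_all _ fun _ => (exp_pos _).le)
          (integral_exp_neg_pos hum hu.2) (integral_exp_neg_pos hvm hv.2)
          (integrable_kernel_mul_exp_neg hum hu.2) (integrable_kernel_mul_exp_neg hvm hv.2)
          abs_crossNorm_sub_pi_div_four_le_one r
    _ ≤ 2 * (exp (-lam) * σ₀)⁻¹ * (exp lam * ∫ r', |u r' - v r'| ∂sphereMeasure) := by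
        rw [mul_one]
        gcongr
        exact integral_abs_exp_neg_sub_le hum hvm hu.2 hv.2 huv
    _ ≤ 2 * (exp (-lam) * σ₀)⁻¹ * (exp lam * (σ₀ ^ (1 / 2 : ℝ) * dist u v)) := by
        gcongr
        exact integral_abs_sub_le_mul_dist u v
    _ = _ := by ring

theorem gammaS_continuous_and_compact_general (lam : ℝ) :
    (∀ u ∈ OmegaLam lam, MemLp (GammaS u) 2 sphereMeasure) ∧
    (∀ (un : ℕ → Lp ℝ 2 sphereMeasure) (u₀ : Lp ℝ 2 sphereMeasure),
      (∀ n, un n ∈ OmegaLam lam) → u₀ ∈ OmegaLam lam →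
      Tendsto un atTop (𝓝 u₀) →
      Tendsto (fun n => eLpNorm (fun r => GammaS (un n) r - GammaS u₀ r) 2 sphereMeasure)
        atTop (𝓝 0)) ∧
    IsCompact (closure {f : Lp ℝ 2 sphereMeasure |
      ∃ u ∈ OmegaLam lam, (f : S2 → ℝ) =ᵐ[sphereMeasure] GammaS u}) := by
  have hΓ_lip (u) (hu : u ∈ OmegaLam lam) := lipschitzWith_gammaS (Lp.aestronglyMeasurable u) hu.2
  have hΓ_bdd (u) (hu : u ∈ OmegaLam lam) := abs_gammaS_le_one (Lp.aestronglyMeasurable u) hu.2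
  obtain ⟨L, hL⟩ := exists_abs_gammaS_sub_le_mul_dist lam
  refine ⟨fun u hu => ?_, fun un u₀ hun hu₀ hlim => ?_, ?_⟩
  · exact .of_bound (hΓ_lip u hu).continuous.aestronglyMeasurable 1 (ae_of_all _ (hΓ_bdd u hu))
  · refine tendsto_eLpNorm_sub_of_abs_sub_le 2 ?_ fun n => hL _ (hun n) _ hu₀
    simpa using (tendsto_iff_dist_tendsto_zero.1 hlim).const_mul L
  · refine (isCompact_closure_setOf_ae_eq_lipschitzWith sphereMeasure 2 1 1).of_isClosed_subset
      isClosed_closure (closure_mono ?_)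
    rintro f ⟨u, hu, hfu⟩
    exact ⟨GammaS u, hΓ_lip u hu, hΓ_bdd u hu, hfu⟩

/-- Theorem 1.1: for fixed `λ`, the map `Γ : Ω_λ ⊆ H₀(S²) → H₀(S²)` maps into `L²`,
is continuous for the `L²` norm, and its image is relatively compact in `L²`. -/
theorem gammaS_continuous_and_compact (lam : ℝ) (hlam : 0 < lam) :
    (∀ u ∈ OmegaLam lam, MemLp (GammaS u) 2 sphereMeasure) ∧
    (∀ (un : ℕ → Lp ℝ 2 sphereMeasure) (u₀ : Lp ℝ 2 sphereMeasure),
      (∀ n, un n ∈ OmegaLam lam) → u₀ ∈ OmegaLam lam →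
      Tendsto un atTop (𝓝 u₀) →
      Tendsto (fun n => eLpNorm (fun r => GammaS (un n) r - GammaS u₀ r) 2 sphereMeasure)
        atTop (𝓝 0)) ∧
    IsCompact (closure {f : Lp ℝ 2 sphereMeasure |
      ∃ u ∈ OmegaLam lam, (f : S2 → ℝ) =ᵐ[sphereMeasure] GammaS u}) :=
  gammaS_continuous_and_compact_general lam
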